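/- arXiv:1808.08111 — 2 statements merged into one kernel-verified Lean document; each statement's English description precedes it below -/
import Mathlib

section
/- Under the Crammer–Singer KKT conditions, for a Type 1 support vector i (0 < α_{iy_i} < C_i) and any class k ≠ y_i with α_{ik} < 0, the equality Σ_j α_{jk}⟨x_i,x_j⟩ + e_{ik} = Σ_j α_{jy_i}⟨x_i,x_j⟩ + e_{iy_i} holds, i.e. the projections onto classes with strictly negative dual variables equal the projection onto the true class. -/
/-!
Both dual variables `η_{i y_i} = C_i - α_{i y_i}` and `η_{ik} = -α_{ik}` are positive, so complementary
slackness makes both constraints active. At `l = y_i` the margin and `e_{i y_i}` vanish, which forces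
`ξ_i = 0`; at `l = k` activity then says that the margin `⟨w_{y_i} - w_k, x_i⟩` equals `e_{ik}`, and
expanding `w_l = Σ_j α_{jl} x_j` turns this into the claimed equality of projections.
-/

open Finset

theorem sum_sum_mul_mul_eq_sum_mul_sum {ι κ : Type*} [Fintype ι] [Fintype κ]
    (c : ι → ℝ) (x : ι → κ → ℝ) (v : κ → ℝ) :
    ∑ r, (∑ j, c j * x j r) * v r = ∑ j, c j * ∑ r, v r * x j r := by
  simp only [sum_mul, mul_sum]
  rw [sum_comm]
  exact sum_congr rfl fun j _ => sum_congr rfl fun r _ => by ring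

theorem eq_sub_of_pos_of_mul_sub_add_eq_zero {η m e ξ : ℝ} (hη : 0 < η)
    (h : η * (m - e + ξ) = 0) : m = e - ξ := by
  have := (mul_eq_zero.1 h).resolve_left hη.ne'
  linarith

theorem lemmaA1_ii_general (n L d : ℕ) (x : Fin n → Fin d → ℝ) (y : Fin n → Fin L)
    (Cc : Fin n → ℝ) (η : Fin n → Fin L → ℝ) (ξ : Fin n → ℝ)
    (α : Fin n → Fin L → ℝ) (e : Fin n → Fin L → ℝ) (w : Fin L → Fin d → ℝ)
    (hα : ∀ i l, α i l = Cc i * (if l = y i then 1 else 0) - η i l)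
    (he : ∀ i l, e i l = 1 - (if l = y i then 1 else 0))
    (hw : ∀ l r, w l r = ∑ j, α j l * x j r)
    (hcs : ∀ i l, η i l * ((∑ r, (w (y i) r - w l r) * x i r) - e i l + ξ i) = 0)
    (i : Fin n) (hSV1 : 0 < α i (y i) ∧ α i (y i) < Cc i)
    (k : Fin L) (hk : k ≠ y i) (hneg : α i k < 0) :
    (∑ j, α j k * (∑ r, x i r * x j r)) + e i k
      = (∑ j, α j (y i) * (∑ r, x i r * x j r)) + e i (y i) := by
  have hey : e i (y i) = 0 := by simp [he]
  have hη_true : 0 < η i (y i) := by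
    have := hα i (y i)
    rw [if_pos rfl, mul_one] at this
    linarith [hSV1.2]
  have hη_k : 0 < η i k := by
    have := hα i k
    simp only [if_neg hk, mul_zero, zero_sub] at this
    linarith
  have hξ : ξ i = 0 := by
    have := eq_sub_of_pos_of_mul_sub_add_eq_zero hη_true (hcs i (y i))
    simp only [sub_self, zero_mul, sum_const_zero, hey] at this
    linarith
  have hmargin := eq_sub_of_pos_of_mul_sub_add_eq_zero hη_k (hcs i k)
  simp only [hw, sub_mul, sum_sub_distrib, sum_sum_mul_mul_eq_sum_mul_sum, hξ, sub_zero] at hmargin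
  rw [hey]
  linarith

/-- Lemma A.1(ii): for a Type 1 support vector `i` and any class `k ≠ y_i` with
`α_{ik} < 0`, the projection on class `k` equals the projection on the true class:
`Σ_j α_{jk} ⟨x_i, x_j⟩ + e_{ik} = Σ_j α_{j y_i} ⟨x_i, x_j⟩ + e_{i y_i}`. -/
theorem lemmaA1_ii (n L d : ℕ) (x : Fin n → Fin d → ℝ) (y : Fin n → Fin L)
    (Cc : Fin n → ℝ) (η : Fin n → Fin L → ℝ) (ξ : Fin n → ℝ)
    (α : Fin n → Fin L → ℝ) (e : Fin n → Fin L → ℝ) (w : Fin L → Fin d → ℝ)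
    (hCc : ∀ i, 0 < Cc i)
    (hα : ∀ i l, α i l = Cc i * (if l = y i then 1 else 0) - η i l)
    (he : ∀ i l, e i l = 1 - (if l = y i then 1 else 0))
    (hw : ∀ l r, w l r = ∑ j, α j l * x j r)
    (hη : ∀ i l, 0 ≤ η i l) (hsum : ∀ i, ∑ l, η i l = Cc i)
    (hξ : ∀ i, 0 ≤ ξ i)
    (hfeas : ∀ i l, (∑ r, (w (y i) r - w l r) * x i r) ≥ e i l - ξ i)
    (hcs : ∀ i l, η i l * ((∑ r, (w (y i) r - w l r) * x i r) - e i l + ξ i) = 0)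
    (i : Fin n) (hSV1 : 0 < α i (y i) ∧ α i (y i) < Cc i)
    (k : Fin L) (hk : k ≠ y i) (hneg : α i k < 0) :
    (∑ j, α j k * (∑ r, x i r * x j r)) + e i k
      = (∑ j, α j (y i) * (∑ r, x i r * x j r)) + e i (y i) :=
  lemmaA1_ii_general n L d x y Cc η ξ α e w hα he hw hcs i hSV1 k hk hneg
end

section
/- Under Assumption (ii) (the leave-one-out solution misclassifies sample t, i.e. max_{q≠y_t} Σ_j α^t_{jq} K(x_j,x_t) ≥ Σ_j α^t_{jy_t} K(x_j,x_t)) and with α_t supported as α_{ty_t} > 0, α_{tk} = -α_{ty_t} for k = argmax_{q≠y_t} Σ_j α^t_{jq}K(x_j,x_t), α_{tl}=0 otherwise, the quantity -Σ_l α_{tl} [Σ_j α^t_{jl} K(x_j,x_t)] = α_{ty_t}[Σ_j α^t_{jk}K(x_j,x_t) - Σ_j α^t_{jy_t}K(x_j,x_t)] ≥ 0, and hence S_t² = Σ_l α_{tl}Σ_j α_{jl}K(x_j,x_t) - Σ_l α_{tl}Σ_j α^t_{jl}K(x_j,x_t) ≥ Σ_l α_{tl}[Σ_j α_{jl} K(x_j,x_t)].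 -/
open Finset

theorem Fintype.sum_mul_eq_of_support_pair {ι R : Type*} [Fintype ι] [CommRing R]
    {w c : ι → R} {y k : ι} {a : R} (hk : k ≠ y) (hy : w y = a) (hwk : w k = -a)
    (hzero : ∀ l, l ≠ y → l ≠ k → w l = 0) :
    ∑ l, w l * c l = a * (c y - c k) := by
  rw [Fintype.sum_eq_add y k hk.symm fun l hl => by rw [hzero l hl.1 hl.2, zero_mul], hy, hwk]
  ring

theorem span_lower_bound_general (n L : ℕ) (κ : Fin n → ℝ)
    (α αt : Fin n → Fin L → ℝ) (t : Fin n) (y k : Fin L) (a : ℝ)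
    (hk : k ≠ y) (ha : 0 ≤ a)
    (hsupp_y : α t y = a) (hsupp_k : α t k = -a)
    (hsupp_zero : ∀ l, l ≠ y → l ≠ k → α t l = 0)
    (hmis : ∑ j, αt j y * κ j ≤ ∑ j, αt j k * κ j)
    (St2 : ℝ)
    (hSt : St2 = (∑ l, α t l * ∑ j, α j l * κ j)
        - (∑ l, α t l * ∑ j, αt j l * κ j)) :
    (-(∑ l, α t l * ∑ j, αt j l * κ j)
        = a * ((∑ j, αt j k * κ j) - ∑ j, αt j y * κ j)) ∧
    (0 ≤ -(∑ l, α t l * ∑ j, αt j l * κ j)) ∧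
    St2 ≥ ∑ l, α t l * ∑ j, α j l * κ j := by
  have hcross : -(∑ l, α t l * ∑ j, αt j l * κ j)
      = a * ((∑ j, αt j k * κ j) - ∑ j, αt j y * κ j) := by
    rw [Fintype.sum_mul_eq_of_support_pair hk hsupp_y hsupp_k hsupp_zero]
    ring
  have hcross_nonneg : 0 ≤ -(∑ l, α t l * ∑ j, αt j l * κ j) :=
    hcross ▸ mul_nonneg ha (sub_nonneg.2 hmis)
  refine ⟨hcross, hcross_nonneg, ?_⟩
  rw [hSt]
  linarith

/-- Final step of Lemma 2: under the misclassification assumption and with `α_t`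
supported on the true class `y` and the offending class `k`
(`α_{ty} = a ≥ 0`, `α_{tk} = -a`), the cross term
`-Σ_l α_{tl} Σ_j α^t_{jl} K(x_j,x_t) = a (Σ_j α^t_{jk} κ_j - Σ_j α^t_{jy} κ_j) ≥ 0`,
hence `S_t² ≥ Σ_l α_{tl} Σ_j α_{jl} K(x_j,x_t)`. -/
theorem span_lower_bound (n L : ℕ) (κ : Fin n → ℝ)
    (α αt : Fin n → Fin L → ℝ) (t : Fin n) (y k : Fin L) (a : ℝ)
    (hk : k ≠ y) (ha : 0 ≤ a)
    (hsupp_y : α t y = a) (hsupp_k : α t k = -a)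
    (hsupp_zero : ∀ l, l ≠ y → l ≠ k → α t l = 0)
    (hargmax : ∀ q, q ≠ y → ∑ j, αt j q * κ j ≤ ∑ j, αt j k * κ j)
    (hmis : ∑ j, αt j y * κ j ≤ ∑ j, αt j k * κ j)
    (St2 : ℝ)
    (hSt : St2 = (∑ l, α t l * ∑ j, α j l * κ j)
        - (∑ l, α t l * ∑ j, αt j l * κ j)) :
    (-(∑ l, α t l * ∑ j, αt j l * κ j)
        = a * ((∑ j, αt j k * κ j) - ∑ j, αt j y * κ j)) ∧
    (0 ≤ -(∑ l, α t l * ∑ j, αt j l * κ j)) ∧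
    St2 ≥ ∑ l, α t l * ∑ j, α j l * κ j :=
  span_lower_bound_general n L κ α αt t y k a hk ha hsupp_y hsupp_k hsupp_zero hmis St2 hSt
end
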